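/- Two distinct finitely supported maps f, g : F_n → F whose supports have admissible convex hulls (barycentre at e or at an edge [e,a_i]) lie in distinct F_n-orbits under the left translation action. -/

import Mathlib

/-!
Left translation by `w` is an automorphism of the Cayley tree, so it carries the convex hull of
the support of `f` onto that of `w • f`, and its barycentre `B` onto `w B`. If `w • f = g` and
both barycentres are admissible, then `w ∈ w B` and `w⁻¹` (the preimage of `1 ∈ w B`) lies in
`B`; so `w` and `w⁻¹` both belong to `{1} ∪ {aᵢ}`, which in a free group forces `w = 1`.
-/

/-- The Cayley graph of the free group `F_n` with respect to the free generators. -/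
def Cayley (n : ℕ) : SimpleGraph (FreeGroup (Fin n)) where
  Adj x y := x ≠ y ∧ ∃ i : Fin n, y = x * FreeGroup.of i ∨ x = y * FreeGroup.of i
  symm := ⟨by
    rintro x y ⟨h, i, hi⟩
    exact ⟨h.symm, i, hi.symm⟩⟩
  loopless := ⟨by rintro x ⟨h, -⟩; exact h rfl⟩

/-- The convex hull of a set of vertices in the Cayley tree: the set of vertices
lying on a geodesic between two points of the set. -/
def cayleyHull (n : ℕ) (S : Set (FreeGroup (Fin n))) : Set (FreeGroup (Fin n)) :=
  {v | ∃ a ∈ S, ∃ b ∈ S,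
    (Cayley n).dist a v + (Cayley n).dist v b = (Cayley n).dist a b}

/-- Eccentricity of a vertex relative to a set of vertices. -/
noncomputable def cayleyEcc (n : ℕ) (S : Set (FreeGroup (Fin n)))
    (v : FreeGroup (Fin n)) : ℕ :=
  sSup ((fun u => (Cayley n).dist v u) '' S)

/-- The barycentre of a finite subtree `S` of the Cayley tree (the vertex or the
pair of adjacent vertices left after repeatedly deleting terminal vertices),
realised as the set of vertices of `S` of minimal eccentricity. -/
def cayleyBarycentre (n : ℕ) (S : Set (FreeGroup (Fin n))) : Set (FreeGroup (Fin n)) :=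
  {v ∈ S | ∀ u ∈ S, cayleyEcc n S v ≤ cayleyEcc n S u}

namespace SimpleGraph

variable {V W : Type*} {G : SimpleGraph V} {G' : SimpleGraph W}

lemma edist_map_le (φ : G →g G') (u v : V) : G'.edist (φ u) (φ v) ≤ G.edist u v := by
  rw [edist_eq_sInf (G := G)]
  refine le_sInf ?_
  rintro _ ⟨p, rfl⟩
  simpa using edist_le (p.map φ)

lemma Iso.edist_eq (φ : G ≃g G') (u v : V) : G'.edist (φ u) (φ v) = G.edist u v :=
  le_antisymm (edist_map_le φ.toHom u v) <| by
    simpa using edist_map_le φ.symm.toHom (φ u) (φ v)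

lemma Iso.dist_eq (φ : G ≃g G') (u v : V) : G'.dist (φ u) (φ v) = G.dist u v := by
  simp only [dist, φ.edist_eq]

end SimpleGraph

namespace FreeGroup

variable {α : Type*}

lemma inv_of_ne_of (i j : α) : (of i)⁻¹ ≠ of j := by
  classical
  exact ne_of_apply_ne toWord (by simp [toWord_inv, invRev])

lemma eq_one_of_mem_of_inv_mem {w : FreeGroup α} (hw : w ∈ insert 1 (Set.range of))
    (hw' : w⁻¹ ∈ insert 1 (Set.range of)) : w = 1 := by
  rcases hw with rfl | ⟨i, rfl⟩
  · rfl
  rcases hw' with h | ⟨j, h⟩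
  · exact inv_eq_one.mp h
  · exact absurd h.symm (inv_of_ne_of i j)

end FreeGroup

section Cayley

variable {n : ℕ}

def cayleyMulLeft (w : FreeGroup (Fin n)) : Cayley n ≃g Cayley n where
  toEquiv := Equiv.mulLeft w
  map_rel_iff' := by
    simp only [Equiv.coe_mulLeft, Cayley, ne_eq, mul_right_inj, mul_assoc, implies_true]

lemma coe_cayleyMulLeft (w : FreeGroup (Fin n)) : ⇑(cayleyMulLeft w) = (w * ·) := rfl

lemma cayleyHull_image (φ : Cayley n ≃g Cayley n) (S : Set (FreeGroup (Fin n))) :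
    cayleyHull n (φ '' S) = φ '' cayleyHull n S := by
  ext v
  obtain ⟨u, rfl⟩ := φ.surjective v
  simp [cayleyHull, φ.injective.mem_set_image, φ.dist_eq]

lemma cayleyEcc_image (φ : Cayley n ≃g Cayley n) (S : Set (FreeGroup (Fin n)))
    (v : FreeGroup (Fin n)) : cayleyEcc n (φ '' S) (φ v) = cayleyEcc n S v := by
  simp only [cayleyEcc, Set.image_image, φ.dist_eq]

lemma cayleyBarycentre_image (φ : Cayley n ≃g Cayley n) (S : Set (FreeGroup (Fin n))) :
    cayleyBarycentre n (φ '' S) = φ '' cayleyBarycentre n S := by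
  ext v
  obtain ⟨u, rfl⟩ := φ.surjective v
  simp [cayleyBarycentre, φ.injective.mem_set_image, cayleyEcc_image]

end Cayley

def IsAdmissibleBarycentre {α : Type*} (B : Set (FreeGroup α)) : Prop :=
  B = {1} ∨ ∃ i : α, B = {1, FreeGroup.of i}

namespace IsAdmissibleBarycentre

variable {α : Type*} {B : Set (FreeGroup α)}

lemma one_mem (hB : IsAdmissibleBarycentre B) : 1 ∈ B := by
  rcases hB with rfl | ⟨i, rfl⟩ <;> simp

lemma subset (hB : IsAdmissibleBarycentre B) : B ⊆ insert 1 (Set.range FreeGroup.of) := by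
  rcases hB with rfl | ⟨i, rfl⟩ <;> simp [Set.insert_subset_iff]

lemma eq_one_of_image_mul {w : FreeGroup α} (hB : IsAdmissibleBarycentre B)
    (hwB : IsAdmissibleBarycentre ((w * ·) '' B)) : w = 1 := by
  have hw : w ∈ (w * ·) '' B := ⟨1, hB.one_mem, mul_one w⟩
  obtain ⟨b, hb, hwb⟩ := hwB.one_mem
  rw [eq_inv_of_mul_eq_one_right hwb] at hb
  exact FreeGroup.eq_one_of_mem_of_inv_mem (hwB.subset hw) (hB.subset hb)

end IsAdmissibleBarycentre

theorem distinct_admissible_maps_in_distinct_orbits_general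
    (n : ℕ) (F : Type) (p : F)
    (f g : FreeGroup (Fin n) → F)
    (hadf : cayleyBarycentre n (cayleyHull n {x | f x ≠ p}) = {1} ∨
      ∃ i : Fin n,
        cayleyBarycentre n (cayleyHull n {x | f x ≠ p}) = {1, FreeGroup.of i})
    (hadg : cayleyBarycentre n (cayleyHull n {x | g x ≠ p}) = {1} ∨
      ∃ i : Fin n,
        cayleyBarycentre n (cayleyHull n {x | g x ≠ p}) = {1, FreeGroup.of i})
    (hfg : f ≠ g) :
    ∀ w : FreeGroup (Fin n), (fun x => f (w⁻¹ * x)) ≠ g := by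
  rintro w rfl
  have hsupp : {x | f (w⁻¹ * x) ≠ p} = (w * ·) '' {x | f x ≠ p} := by
    rw [Set.image_mul_left]; rfl
  rw [hsupp, ← coe_cayleyMulLeft, cayleyHull_image, cayleyBarycentre_image] at hadg
  obtain rfl : w = 1 := IsAdmissibleBarycentre.eq_one_of_image_mul hadf hadg
  exact hfg (by simp)

/-- Two distinct finitely supported maps `f, g : F_n → F` whose supports have
admissible convex hulls (barycentre at the vertex `e` or at an edge `[e, aᵢ]`)
lie in distinct orbits of the left-translation action of `F_n`. -/
theorem distinct_admissible_maps_in_distinct_orbits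
    (n : ℕ) (F : Type) [Finite F] (p : F)
    (f g : FreeGroup (Fin n) → F)
    (hf : {x | f x ≠ p}.Finite) (hg : {x | g x ≠ p}.Finite)
    (hadf : cayleyBarycentre n (cayleyHull n {x | f x ≠ p}) = {1} ∨
      ∃ i : Fin n,
        cayleyBarycentre n (cayleyHull n {x | f x ≠ p}) = {1, FreeGroup.of i})
    (hadg : cayleyBarycentre n (cayleyHull n {x | g x ≠ p}) = {1} ∨
      ∃ i : Fin n,
        cayleyBarycentre n (cayleyHull n {x | g x ≠ p}) = {1, FreeGroup.of i})
    (hfg : f ≠ g) :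
    ∀ w : FreeGroup (Fin n), (fun x => f (w⁻¹ * x)) ≠ g :=
  distinct_admissible_maps_in_distinct_orbits_general n F p f g hadf hadg hfg
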